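/- On the ellipsoid x²/a + y²/b + z²/c = 1 in Minkowski 3-space, within the region where f(Q) = x²/a² + y²/b² − z²/c² ≠ 0, the metric induced from the Minkowski form is geodesically equivalent to the Riemannian metric ds² = (dx²/a + dy²/b + dz²/c)/|x²/a² + y²/b² − z²/c²|: every critical curve of the Lagrangian L(P,Q) = (A(P)·P)/f(Q) (where A = diag(1/a,1/b,1/c), constrained to the ellipsoid) satisfies, after the normal component is removed, that its acceleration Q̈ lies in the plane spanned by the velocity Q̇ and the Minkowski normal N(Q) = (x/a, y/b, −z/c); hence it is a reparametrized geodesic of the induced metric. -/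

import Mathlib

/-!
Differentiating the constraint `x²/a + y²/b + z²/c = 1` twice gives `A(Q)·Q̇ = 0` and
`A(Q̇)·Q̇ + A(Q)·Q̈ = 0`. Pairing the Euler–Lagrange equation with `Q` and using these together
with `∇f(Q)·Q = 2 f(Q)` makes every term cancel except `λ · A(Q)·Q = λ`, so `λ = 0`. Once the
multiplier vanishes, the Euler–Lagrange equation, multiplied through by `a`, `b`, `c`, expresses
`Q̈` directly as a combination of `Q̇` and `N(Q) = (x/a, y/b, -z/c)`.
-/

theorem HasDerivAt.eq_zero_of_forall_eq {f : ℝ → ℝ} {f' k t : ℝ} (hf : HasDerivAt f f' t)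
    (hk : ∀ s, f s = k) : f' = 0 := by
  rw [funext hk] at hf
  exact hf.unique (hasDerivAt_const t k)

section Quadric

variable {a b c k : ℝ} {x y z u v w xdd ydd zdd : ℝ → ℝ}

theorem quadric_tangency (hQ : ∀ t, x t ^ 2 / a + y t ^ 2 / b + z t ^ 2 / c = k)
    (hx : ∀ t, HasDerivAt x (u t) t) (hy : ∀ t, HasDerivAt y (v t) t)
    (hz : ∀ t, HasDerivAt z (w t) t) (t : ℝ) :
    x t * u t / a + y t * v t / b + z t * w t / c = 0 := by
  have hderiv := ((((hx t).fun_pow 2).div_const a).fun_add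
    (((hy t).fun_pow 2).div_const b)).fun_add (((hz t).fun_pow 2).div_const c)
  have h := hderiv.eq_zero_of_forall_eq hQ
  linear_combination h / 2

theorem quadric_tangency_deriv (hQ : ∀ t, x t ^ 2 / a + y t ^ 2 / b + z t ^ 2 / c = k)
    (hx : ∀ t, HasDerivAt x (u t) t) (hy : ∀ t, HasDerivAt y (v t) t)
    (hz : ∀ t, HasDerivAt z (w t) t) (hu : ∀ t, HasDerivAt u (xdd t) t)
    (hv : ∀ t, HasDerivAt v (ydd t) t) (hw : ∀ t, HasDerivAt w (zdd t) t) (t : ℝ) :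
    (u t * u t + x t * xdd t) / a + (v t * v t + y t * ydd t) / b +
      (w t * w t + z t * zdd t) / c = 0 :=
  (((((hx t).mul (hu t)).div_const a).add (((hy t).mul (hv t)).div_const b)).add
    (((hz t).mul (hw t)).div_const c)).eq_zero_of_forall_eq (quadric_tangency hQ hx hy hz)

end Quadric

section EulerLagrange

variable {a b c x y z u v w xdd ydd zdd α κ lam : ℝ}

/-- Here `α = ∇f(Q)·Q̇ / f(Q)` and `κ = A(Q̇)·Q̇ / (2 f(Q))` are the coefficients of the
Euler–Lagrange equation of `L(P, Q) = A(P)·P / f(Q)`. -/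
theorem lagrange_multiplier_eq_zero
    (hEL1 : xdd / a - α * (u / a) + κ * (2 * x / a ^ 2) = lam * (x / a))
    (hEL2 : ydd / b - α * (v / b) + κ * (2 * y / b ^ 2) = lam * (y / b))
    (hEL3 : zdd / c - α * (w / c) + κ * (-(2 * z) / c ^ 2) = lam * (z / c))
    (hQ : x ^ 2 / a + y ^ 2 / b + z ^ 2 / c = 1)
    (htan : x * u / a + y * v / b + z * w / c = 0)
    (htan' : (u * u + x * xdd) / a + (v * v + y * ydd) / b + (w * w + z * zdd) / c = 0)
    (hκ : κ * (2 * (x ^ 2 / a ^ 2 + y ^ 2 / b ^ 2 - z ^ 2 / c ^ 2)) =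
      u ^ 2 / a + v ^ 2 / b + w ^ 2 / c) :
    lam = 0 := by
  linear_combination -x * hEL1 - y * hEL2 - z * hEL3 + htan' - α * htan + hκ - lam * hQ

theorem acceleration_eq_of_lagrange_multiplier_eq_zero (ha : a ≠ 0) (hb : b ≠ 0) (hc : c ≠ 0)
    (hEL1 : xdd / a - α * (u / a) + κ * (2 * x / a ^ 2) = 0)
    (hEL2 : ydd / b - α * (v / b) + κ * (2 * y / b ^ 2) = 0)
    (hEL3 : zdd / c - α * (w / c) + κ * (-(2 * z) / c ^ 2) = 0) :
    xdd = α * u + -(2 * κ) * (x / a) ∧ ydd = α * v + -(2 * κ) * (y / b) ∧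
      zdd = α * w + -(2 * κ) * (-z / c) := by
  field_simp at hEL1 hEL2 hEL3
  refine ⟨?_, ?_, ?_⟩ <;> field_simp
  · linear_combination hEL1
  · linear_combination hEL2
  · linear_combination hEL3

end EulerLagrange

/-- The induced metric on the ellipsoid in Minkowski 3-space is geodesically equivalent to
ds² = (dx²/a + dy²/b + dz²/c)/|x²/a² + y²/b² − z²/c²|: every curve on the ellipsoid
satisfying the constrained Euler–Lagrange equation
A(Q̈) − (P·∇f/f)A(P) + (A(P)·P/(2f))∇f = λ·A(Q) (with A = diag(1/a,1/b,1/c),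
f = x²/a² + y²/b² − z²/c²) has acceleration in the span of the velocity and the Minkowski
normal N(Q) = (x/a, y/b, −z/c); hence it is a reparametrized geodesic of the induced metric. -/
theorem stmt14 (a b c : ℝ) (ha : 0 < a) (hb : 0 < b) (hc : 0 < c)
    (x y z u v w xdd ydd zdd lam : ℝ → ℝ)
    (hell : ∀ t, (x t) ^ 2 / a + (y t) ^ 2 / b + (z t) ^ 2 / c = 1)
    (hx : ∀ t, HasDerivAt x (u t) t) (hy : ∀ t, HasDerivAt y (v t) t)
    (hz : ∀ t, HasDerivAt z (w t) t)
    (hu : ∀ t, HasDerivAt u (xdd t) t) (hv : ∀ t, HasDerivAt v (ydd t) t)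
    (hw : ∀ t, HasDerivAt w (zdd t) t)
    (hnd : ∀ t, (x t) ^ 2 / a ^ 2 + (y t) ^ 2 / b ^ 2 - (z t) ^ 2 / c ^ 2 ≠ 0)
    (hEL1 : ∀ t, xdd t / a -
        (2 * (x t * u t / a ^ 2 + y t * v t / b ^ 2 - z t * w t / c ^ 2) /
          ((x t) ^ 2 / a ^ 2 + (y t) ^ 2 / b ^ 2 - (z t) ^ 2 / c ^ 2)) * (u t / a) +
        (((u t) ^ 2 / a + (v t) ^ 2 / b + (w t) ^ 2 / c) /
          (2 * ((x t) ^ 2 / a ^ 2 + (y t) ^ 2 / b ^ 2 - (z t) ^ 2 / c ^ 2))) *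
          (2 * x t / a ^ 2) = lam t * (x t / a))
    (hEL2 : ∀ t, ydd t / b -
        (2 * (x t * u t / a ^ 2 + y t * v t / b ^ 2 - z t * w t / c ^ 2) /
          ((x t) ^ 2 / a ^ 2 + (y t) ^ 2 / b ^ 2 - (z t) ^ 2 / c ^ 2)) * (v t / b) +
        (((u t) ^ 2 / a + (v t) ^ 2 / b + (w t) ^ 2 / c) /
          (2 * ((x t) ^ 2 / a ^ 2 + (y t) ^ 2 / b ^ 2 - (z t) ^ 2 / c ^ 2))) *
          (2 * y t / b ^ 2) = lam t * (y t / b))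
    (hEL3 : ∀ t, zdd t / c -
        (2 * (x t * u t / a ^ 2 + y t * v t / b ^ 2 - z t * w t / c ^ 2) /
          ((x t) ^ 2 / a ^ 2 + (y t) ^ 2 / b ^ 2 - (z t) ^ 2 / c ^ 2)) * (w t / c) +
        (((u t) ^ 2 / a + (v t) ^ 2 / b + (w t) ^ 2 / c) /
          (2 * ((x t) ^ 2 / a ^ 2 + (y t) ^ 2 / b ^ 2 - (z t) ^ 2 / c ^ 2))) *
          (-(2 * z t) / c ^ 2) = lam t * (z t / c)) :
    ∀ t, lam t = 0 ∧ ∃ α β : ℝ,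
      xdd t = α * u t + β * (x t / a) ∧
      ydd t = α * v t + β * (y t / b) ∧
      zdd t = α * w t + β * (-(z t) / c) := by
  intro t
  have hlam : lam t = 0 :=
    lagrange_multiplier_eq_zero (hEL1 t) (hEL2 t) (hEL3 t) (hell t)
      (quadric_tangency hell hx hy hz t) (quadric_tangency_deriv hell hx hy hz hu hv hw t)
      (div_mul_cancel₀ _ (mul_ne_zero two_ne_zero (hnd t)))
  have hEL1 := hEL1 t
  have hEL2 := hEL2 t
  have hEL3 := hEL3 t
  rw [hlam, zero_mul] at hEL1 hEL2 hEL3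
  exact ⟨hlam, _, _, acceleration_eq_of_lagrange_multiplier_eq_zero ha.ne' hb.ne' hc.ne'
    hEL1 hEL2 hEL3⟩
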